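/- arXiv:2404.14778 — 5 statements merged into one kernel-verified Lean document; each statement's English description precedes it below -/
import Mathlib

section
/- First-order spatial variation of the channel gain (Lemma 1, first order; Appendix A, Eq. (38)): if R ≠ L, R ≠ U, cosθ ≠ 0 and cosφ ≠ 0, then h is differentiable at R and its gradient at R equals h(R) • [ (m/(d1·cosθ)) • N1 + (1/(d2·cosφ)) • N2 − (m/d1 + 2/(d1+d2)) • L̂R − (1/d2 + 2/(d1+d2)) • ÛR ]. -/
open scoped RealInnerProductSpace

/-!
Away from `L` and `U`, `h = cos θ ^ m * cos φ / (d₁ + d₂) ^ 2` is a product of powers of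
nonvanishing differentiable functions, so its gradient is `h` times the logarithmic gradient
`m ∇cos θ / cos θ + ∇cos φ / cos φ - 2 ∇(d₁ + d₂) / (d₁ + d₂)`. The gradient of `‖· - c‖` is
the unit vector `û` from `c`, and that of `⟪n, · - c⟫ / ‖· - c‖` is `(n - ⟪n, û⟫ û) / ‖· - c‖`.
-/

section GradientCalculus

variable {F : Type*} [NormedAddCommGroup F] [InnerProductSpace ℝ F] [CompleteSpace F]
  {f g : F → ℝ} {f' g' : F} {x : F}

theorem HasGradientAt.add (hf : HasGradientAt f f' x) (hg : HasGradientAt g g' x) :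
    HasGradientAt (fun y => f y + g y) (f' + g') x := by
  rw [hasGradientAt_iff_hasFDerivAt] at *
  rw [map_add]
  exact hf.add hg

theorem HasGradientAt.mul (hf : HasGradientAt f f' x) (hg : HasGradientAt g g' x) :
    HasGradientAt (fun y => f y * g y) (f x • g' + g x • f') x := by
  rw [hasGradientAt_iff_hasFDerivAt] at *
  rw [map_add, map_smul, map_smul]
  exact hf.mul hg

theorem HasDerivAt.comp_hasGradientAt (x : F) {φ : ℝ → ℝ} {φ' : ℝ} (hφ : HasDerivAt φ φ' (f x))
    (hf : HasGradientAt f f' x) : HasGradientAt (fun y => φ (f y)) (φ' • f') x := by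
  rw [hasGradientAt_iff_hasFDerivAt] at *
  rw [map_smul]
  exact hφ.comp_hasFDerivAt x hf

theorem hasGradientAt_inner_sub (n c : F) : HasGradientAt (fun y => ⟪n, y - c⟫) n x := by
  rw [hasGradientAt_iff_hasFDerivAt]
  have h := ((innerSL ℝ n).hasFDerivAt (x := x)).sub_const ⟪n, c⟫
  simp only [innerSL_apply_apply, ← inner_sub_right] at h
  exact h.congr_fderiv (by ext; simp)

theorem hasGradientAt_norm_sq_sub (c : F) :
    HasGradientAt (fun y => ‖y - c‖ ^ 2) ((2 : ℝ) • (x - c)) x := by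
  rw [hasGradientAt_iff_hasFDerivAt]
  exact ((hasFDerivAt_id x).sub_const c).norm_sq.congr_fderiv (by ext; simp)

theorem hasGradientAt_norm_sub {c : F} (hx : x ≠ c) :
    HasGradientAt (fun y => ‖y - c‖) (‖x - c‖⁻¹ • (x - c)) x := by
  have hd : ‖x - c‖ ≠ 0 := norm_ne_zero_iff.2 (sub_ne_zero.2 hx)
  have := (Real.hasDerivAt_sqrt (pow_ne_zero 2 hd)).comp_hasGradientAt x
    (hasGradientAt_norm_sq_sub c)
  simp only [Real.sqrt_sq (norm_nonneg _), smul_smul] at this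
  convert this using 2
  field_simp

theorem HasGradientAt.pow_mul_div_pow {a b c : F → ℝ} {a' b' c' : F}
    (ha : HasGradientAt a a' x) (hb : HasGradientAt b b' x) (hc : HasGradientAt c c' x)
    (ha0 : a x ≠ 0) (hb0 : b x ≠ 0) (hc0 : c x ≠ 0) (m n : ℕ) :
    HasGradientAt (fun y => a y ^ m * b y / c y ^ n)
      ((a x ^ m * b x / c x ^ n) • ((m / a x) • a' + (b x)⁻¹ • b' - (n / c x) • c')) x := by
  have key := ((hasDerivAt_pow m (a x)).comp_hasGradientAt x ha).mul hb |>.mul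
    ((hasDerivAt_inv (pow_ne_zero n hc0)).comp_hasGradientAt x
      ((hasDerivAt_pow n (c x)).comp_hasGradientAt x hc))
  simp only [div_eq_mul_inv]
  convert key using 1
  match_scalars
  · cases m with
    | zero => simp
    | succ k => rw [Nat.add_sub_cancel]; field_simp; ring
  · field_simp
  · cases n with
    | zero => simp
    | succ k => rw [Nat.add_sub_cancel]; field_simp; ring

theorem hasGradientAt_inner_div_norm_sub (n : F) {c : F} (hx : x ≠ c) :
    HasGradientAt (fun y => ⟪n, y - c⟫ / ‖y - c‖)
      (‖x - c‖⁻¹ • n - (⟪n, x - c⟫ / ‖x - c‖ ^ 3) • (x - c)) x := by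
  have hd : ‖x - c‖ ≠ 0 := norm_ne_zero_iff.2 (sub_ne_zero.2 hx)
  have key := (hasGradientAt_inner_sub n c).mul
    ((hasDerivAt_inv hd).comp_hasGradientAt x (hasGradientAt_norm_sub hx))
  simp only [div_eq_mul_inv]
  convert key using 1
  match_scalars <;> field_simp

end GradientCalculus

theorem lambertian_gain_gradient_general
    (L U N1 N2 : EuclideanSpace ℝ (Fin 3))
    (m : ℕ)
    (h : EuclideanSpace ℝ (Fin 3) → ℝ)
    (hdef : ∀ R, h R =
      (⟪N1, R - L⟫ / ‖R - L‖) ^ m * (⟪N2, R - U⟫ / ‖R - U‖) / (‖R - L‖ + ‖R - U‖) ^ 2)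
    (R : EuclideanSpace ℝ (Fin 3)) (hRL : R ≠ L) (hRU : R ≠ U)
    (d1 d2 : ℝ) (hd1 : d1 = ‖R - L‖) (hd2 : d2 = ‖R - U‖)
    (LR UR : EuclideanSpace ℝ (Fin 3)) (hLR : LR = (1 / d1) • (R - L)) (hUR : UR = (1 / d2) • (R - U))
    (cosθ cosφ : ℝ) (hcosθ : cosθ = ⟪N1, LR⟫) (hcosφ : cosφ = ⟪N2, UR⟫)
    (hθ : cosθ ≠ 0) (hφ : cosφ ≠ 0) :
    DifferentiableAt ℝ h R ∧
      gradient h R = h R •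
        (((m : ℝ) / (d1 * cosθ)) • N1 + (1 / (d2 * cosφ)) • N2
          - ((m : ℝ) / d1 + 2 / (d1 + d2)) • LR
          - (1 / d2 + 2 / (d1 + d2)) • UR) := by
  subst hd1 hd2 hLR hUR hcosθ hcosφ
  have hdL : ‖R - L‖ ≠ 0 := norm_ne_zero_iff.2 (sub_ne_zero.2 hRL)
  have hdU : ‖R - U‖ ≠ 0 := norm_ne_zero_iff.2 (sub_ne_zero.2 hRU)
  rw [real_inner_smul_right, one_div_mul_eq_div] at hθ hφ
  obtain ⟨hinner1, -⟩ := div_ne_zero_iff.1 hθ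
  obtain ⟨hinner2, -⟩ := div_ne_zero_iff.1 hφ
  have hgrad := (hasGradientAt_inner_div_norm_sub N1 hRL).pow_mul_div_pow
    (hasGradientAt_inner_div_norm_sub N2 hRU)
    ((hasGradientAt_norm_sub hRL).add (hasGradientAt_norm_sub hRU)) hθ hφ (by positivity) m 2
  rw [show h = _ from funext hdef]
  refine ⟨hgrad.differentiableAt, hgrad.gradient.trans ?_⟩
  congr 1
  simp only [real_inner_smul_right]
  match_scalars <;> field_simp <;> ring

/-- First-order spatial variation of the Lambertian channel gain (Lemma 1, first order):
the gradient of `h` at `R` equals `h R` times the stated combination of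
`N1`, `N2`, `L̂R` and `ÛR`. -/
theorem lambertian_gain_gradient
    (L U N1 N2 : EuclideanSpace ℝ (Fin 3))
    (hN1 : ‖N1‖ = 1) (hN2 : ‖N2‖ = 1)
    (m : ℕ) (hm : 1 ≤ m)
    (h : EuclideanSpace ℝ (Fin 3) → ℝ)
    (hdef : ∀ R, h R =
      (⟪N1, R - L⟫ / ‖R - L‖) ^ m * (⟪N2, R - U⟫ / ‖R - U‖) / (‖R - L‖ + ‖R - U‖) ^ 2)
    (R : EuclideanSpace ℝ (Fin 3)) (hRL : R ≠ L) (hRU : R ≠ U)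
    (d1 d2 : ℝ) (hd1 : d1 = ‖R - L‖) (hd2 : d2 = ‖R - U‖)
    (LR UR : EuclideanSpace ℝ (Fin 3)) (hLR : LR = (1 / d1) • (R - L)) (hUR : UR = (1 / d2) • (R - U))
    (cosθ cosφ : ℝ) (hcosθ : cosθ = ⟪N1, LR⟫) (hcosφ : cosφ = ⟪N2, UR⟫)
    (hθ : cosθ ≠ 0) (hφ : cosφ ≠ 0) :
    DifferentiableAt ℝ h R ∧
      gradient h R = h R •
        (((m : ℝ) / (d1 * cosθ)) • N1 + (1 / (d2 * cosφ)) • N2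
          - ((m : ℝ) / d1 + 2 / (d1 + d2)) • LR
          - (1 / d2 + 2 / (d1 + d2)) • UR) :=
  lambertian_gain_gradient_general L U N1 N2 m h hdef R hRL hRU d1 d2 hd1 hd2 LR UR hLR hUR cosθ
    cosφ hcosθ hcosφ hθ hφ
end

section
/- First-order temporal variation of the channel gain under receiver motion (Lemma 2, first order; Appendix B): assume R ≠ L, R ≠ U and cosφ ≠ 0. Then g is differentiable at t = 0 and g'(0) = h(R) · ⟪(1/d2 + 2/(d1+d2)) • ÛR − (1/(d2·cosφ)) • N2, v⟫ (this is the first-order coefficient of the temporal variation; the paper's Eq. (13) states the same expression up to an overall sign). -/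
open scoped RealInnerProductSpace

/-!
Along the receiver path `t ↦ R - U - t • v` the gain is `C · p(t) / r(t) / (d1 + r(t))²` with
`p(t) = ⟪N2, R - U - t • v⟫` affine and `r(t) = ‖R - U - t • v‖`, so `r'(0) = -⟪ÛR, v⟫`.
The claimed coefficient is the logarithmic derivative `p'/p - (1/r + 2/(d1 + r)) r'` at `0`,
where `p(0) = d2 cosφ` and `r(0) = d2`.
-/

theorem HasDerivAt.norm {E : Type*} [NormedAddCommGroup E] [InnerProductSpace ℝ E]
    {γ : ℝ → E} {γ' : E} {t : ℝ} (hγ : HasDerivAt γ γ' t) (ht : γ t ≠ 0) :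
    HasDerivAt (fun s => ‖γ s‖) (⟪γ t, γ'⟫ / ‖γ t‖) t := by
  have hsq : 0 < ‖γ t‖ ^ 2 := by positivity
  convert hγ.norm_sq.sqrt hsq.ne' using 1
  · simp [Real.sqrt_sq (norm_nonneg _)]
  · rw [Real.sqrt_sq (norm_nonneg _)]; ring

theorem HasDerivAt.mul_div_div_add_sq {𝕜 : Type*} [NontriviallyNormedField 𝕜]
    {p r : 𝕜 → 𝕜} {p' r' t : 𝕜} (c d : 𝕜)
    (hp : HasDerivAt p p' t) (hr : HasDerivAt r r' t)
    (hpt : p t ≠ 0) (hrt : r t ≠ 0) (hdr : d + r t ≠ 0) :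
    HasDerivAt (fun s => c * (p s / r s) / (d + r s) ^ 2)
      (c * (p t / r t) / (d + r t) ^ 2 * (p' / p t - (1 / r t + 2 / (d + r t)) * r')) t := by
  refine (((hp.fun_div hr hrt).const_mul c).fun_div ((hr.const_add d).fun_pow 2)
    (pow_ne_zero 2 hdr)).congr_deriv ?_
  field_simp
  ring

theorem lambertian_gain_temporal_first_order_general
    (L U N1 N2 : EuclideanSpace ℝ (Fin 3))
    (m : ℕ)
    (h : EuclideanSpace ℝ (Fin 3) → ℝ)
    (hdef : ∀ R, h R =
      (⟪N1, R - L⟫ / ‖R - L‖) ^ m * (⟪N2, R - U⟫ / ‖R - U‖) / (‖R - L‖ + ‖R - U‖) ^ 2)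
    (R : EuclideanSpace ℝ (Fin 3)) (hRU : R ≠ U)
    (d1 d2 : ℝ) (hd1 : d1 = ‖R - L‖) (hd2 : d2 = ‖R - U‖)
    (UR : EuclideanSpace ℝ (Fin 3)) (hUR : UR = (1 / d2) • (R - U))
    (cosφ : ℝ) (hcosφ : cosφ = ⟪N2, UR⟫)
    (hφ : cosφ ≠ 0)
    (v : EuclideanSpace ℝ (Fin 3))
    (g : ℝ → ℝ)
    (hg : ∀ t, g t =
      (⟪N1, R - L⟫ / ‖R - L‖) ^ m * (⟪N2, R - U - t • v⟫ / ‖R - U - t • v‖)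
        / (‖R - L‖ + ‖R - U - t • v‖) ^ 2) :
    DifferentiableAt ℝ g 0 ∧
      deriv g 0 = h R * ⟪(1 / d2 + 2 / (d1 + d2)) • UR - (1 / (d2 * cosφ)) • N2, v⟫ := by
  have hd2pos : 0 < d2 := hd2 ▸ norm_pos_iff.mpr (sub_ne_zero.mpr hRU)
  have hcos : ⟪N2, R - U⟫ = d2 * cosφ := by
    rw [hcosφ, hUR, real_inner_smul_right]
    field_simp
  have hγ : HasDerivAt (fun t : ℝ => R - U - t • v) (-v) 0 := by
    simpa using ((hasDerivAt_id (0 : ℝ)).smul_const v).const_sub (R - U)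
  have hp : HasDerivAt (fun t : ℝ => ⟪N2, R - U - t • v⟫) (-⟪N2, v⟫) 0 := by
    simpa using (hasDerivAt_const (0 : ℝ) N2).inner ℝ hγ
  have hr : HasDerivAt (fun t : ℝ => ‖R - U - t • v‖) (-⟪R - U, v⟫ / d2) 0 := by
    simpa [hd2] using hγ.norm (by simpa using sub_ne_zero.mpr hRU)
  have hgain := hp.mul_div_div_add_sq ((⟪N1, R - L⟫ / ‖R - L‖) ^ m) ‖R - L‖ hr
    (by simp [hcos, hd2pos.ne', hφ]) (by simpa [← hd2] using hd2pos.ne')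
    (by simp only [zero_smul, sub_zero, ← hd2]; positivity [hd2pos])
  rw [funext hg]
  refine ⟨hgain.differentiableAt, ?_⟩
  rw [hgain.deriv, hdef R]
  simp only [zero_smul, sub_zero, hcos, ← hd1, ← hd2, hUR, inner_sub_left, real_inner_smul_left]
  ring

/-- First-order temporal variation of the channel gain under receiver motion
(Lemma 2, first order): `g` is differentiable at `t = 0` and
`g'(0) = h(R) · ⟪(1/d2 + 2/(d1+d2)) • ÛR − (1/(d2·cosφ)) • N2, v⟫`. -/
theorem lambertian_gain_temporal_first_order
    (L U N1 N2 : EuclideanSpace ℝ (Fin 3))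
    (hN1 : ‖N1‖ = 1) (hN2 : ‖N2‖ = 1)
    (m : ℕ) (hm : 1 ≤ m)
    (h : EuclideanSpace ℝ (Fin 3) → ℝ)
    (hdef : ∀ R, h R =
      (⟪N1, R - L⟫ / ‖R - L‖) ^ m * (⟪N2, R - U⟫ / ‖R - U‖) / (‖R - L‖ + ‖R - U‖) ^ 2)
    (R : EuclideanSpace ℝ (Fin 3)) (hRL : R ≠ L) (hRU : R ≠ U)
    (d1 d2 : ℝ) (hd1 : d1 = ‖R - L‖) (hd2 : d2 = ‖R - U‖)
    (LR UR : EuclideanSpace ℝ (Fin 3)) (hLR : LR = (1 / d1) • (R - L)) (hUR : UR = (1 / d2) • (R - U))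
    (cosθ cosφ : ℝ) (hcosθ : cosθ = ⟪N1, LR⟫) (hcosφ : cosφ = ⟪N2, UR⟫)
    (hφ : cosφ ≠ 0)
    (v : EuclideanSpace ℝ (Fin 3))
    (g : ℝ → ℝ)
    (hg : ∀ t, g t =
      (⟪N1, R - L⟫ / ‖R - L‖) ^ m * (⟪N2, R - U - t • v⟫ / ‖R - U - t • v‖)
        / (‖R - L‖ + ‖R - U - t • v‖) ^ 2) :
    DifferentiableAt ℝ g 0 ∧
      deriv g 0 = h R * ⟪(1 / d2 + 2 / (d1 + d2)) • UR - (1 / (d2 * cosφ)) • N2, v⟫ :=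
  lambertian_gain_temporal_first_order_general L U N1 N2 m h hdef R hRU d1 d2 hd1 hd2 UR hUR cosφ
    hcosφ hφ v g hg
end

section
/- Second-order temporal expansion of the relative channel-gain variation (Lemma 2): assume R ≠ L, R ≠ U, cosφ ≠ 0 and h(R) ≠ 0. Let a = ⟪(1/d2 + 2/(d1+d2)) • ÛR − (1/(d2·cosφ)) • N2, v⟫ and b = (the second derivative of g at 0) / h(R). Then the temporal relative growth ξ_t(t) := (g(t) − g(0))/g(0) satisfies ξ_t(t) − a·t − (b/2)·t² = o(t²) as t → 0 (in the Asymptotics.IsLittleO sense). -/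
open scoped RealInnerProductSpace Topology
open Asymptotics Filter

/-!
Along the trajectory the gain factors as `g t = c * ρ (R - U - t • v)`, where `c` is the constant
transmitter factor and `ρ p = ⟪N2, p⟫ / ‖p‖ / (d1 + ‖p‖) ^ 2` is smooth away from `p = 0`. So `g`
is `C²` near `0`, and Peano's form of Taylor's theorem expands `g t - g 0` to second order. After
dividing by `g 0 = h R`, what remains is `g' 0 = a * g 0`: the coefficient `a` is the logarithmic
derivative of `ρ` in the direction `-v`.
-/

theorem ContDiffAt.isLittleO_sub_taylor_two {E : Type*} [NormedAddCommGroup E] [NormedSpace ℝ E]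
    {f : ℝ → E} {x₀ : ℝ} (hf : ContDiffAt ℝ 2 f x₀) :
    (fun x => f x - f x₀ - (x - x₀) • deriv f x₀ - ((x - x₀) ^ 2 / 2) • deriv (deriv f) x₀)
      =o[𝓝 x₀] fun x => (x - x₀) ^ 2 := by
  obtain ⟨u, hu, hfu⟩ := hf.contDiffOn le_rfl (by simp)
  obtain ⟨ε, hε, hball⟩ := Metric.mem_nhds_iff.1 hu
  have hs : IsOpen (Metric.ball x₀ ε) := Metric.isOpen_ball
  have hx₀ : x₀ ∈ Metric.ball x₀ ε := Metric.mem_ball_self hε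
  have htaylor := taylor_isLittleO (n := 2) (convex_ball x₀ ε) hx₀ (hfu.mono hball)
  rw [nhdsWithin_eq_nhds.2 (hs.mem_nhds hx₀)] at htaylor
  refine htaylor.congr_left fun x => ?_
  have h1 := iteratedDerivWithin_of_isOpen_eq_iterate (n := 1) (f := f) hs hx₀
  have h2 := iteratedDerivWithin_of_isOpen_eq_iterate (n := 2) (f := f) hs hx₀
  simp only [Function.iterate_succ, Function.iterate_zero, Function.comp_apply, id] at h1 h2
  simp [taylor_within_apply, h1, h2, div_eq_inv_mul, sub_sub, one_add_one_eq_two]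

section
variable {F : Type*} [NormedAddCommGroup F] [InnerProductSpace ℝ F]

theorem HasDerivAt.norm_s4 {f : ℝ → F} {f' : F} {x : ℝ} (hf : HasDerivAt f f' x) (h0 : f x ≠ 0) :
    HasDerivAt (‖f ·‖) (⟪f x, f'⟫ / ‖f x‖) x := by
  have hsq := hf.norm_sq.sqrt (pow_ne_zero 2 (norm_ne_zero_iff.2 h0))
  simp only [Real.sqrt_sq (norm_nonneg _)] at hsq
  convert hsq using 1
  ring

variable (n : F) (d : ℝ)

noncomputable def receiverGain (p : F) : ℝ := ⟪n, p⟫ / ‖p‖ / (d + ‖p‖) ^ 2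

variable {n d}

theorem contDiffAt_receiverGain {k : WithTop ℕ∞} {p : F} (hd : 0 ≤ d) (hp : p ≠ 0) :
    ContDiffAt ℝ k (receiverGain n d) p := by
  have hnorm : ContDiffAt ℝ k (‖·‖) p := contDiffAt_norm ℝ hp
  have hpos : 0 < ‖p‖ := norm_pos_iff.2 hp
  exact ((contDiffAt_const.inner ℝ contDiffAt_id).div hnorm hpos.ne').div
    ((contDiffAt_const.add hnorm).pow 2) (by positivity)

theorem hasDerivAt_receiverGain_sub_smul {p : F} (v : F) (hd : 0 ≤ d) (hp : p ≠ 0)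
    (hnp : ⟪n, p⟫ ≠ 0) :
    HasDerivAt (fun t : ℝ => receiverGain n d (p - t • v))
      (⟪(1 / ‖p‖ + 2 / (d + ‖p‖)) • ((1 / ‖p‖) • p) - (1 / (‖p‖ * ⟪n, (1 / ‖p‖) • p⟫)) • n, v⟫
        * receiverGain n d p) 0 := by
  have hline : HasDerivAt (fun t : ℝ => p - t • v) (-v) 0 := by
    simpa using ((hasDerivAt_id (0 : ℝ)).smul_const v).const_sub p
  have hinner : HasDerivAt (fun t : ℝ => ⟪n, p - t • v⟫) ⟪n, -v⟫ 0 := by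
    simpa using (hasDerivAt_const (0 : ℝ) n).inner ℝ hline
  have hnorm := hline.norm_s4 (by simpa using hp)
  have hpos : 0 < ‖p‖ := norm_pos_iff.2 hp
  have hsum : 0 < d + ‖p‖ := by positivity
  have := (hinner.div hnorm (by simpa using hpos.ne')).div ((hnorm.const_add d).pow 2)
    (by simpa using hsum.ne')
  refine this.congr_deriv ?_
  rw [real_inner_comm] at hnp
  simp only [receiverGain, Pi.div_apply, Pi.pow_apply, zero_smul, sub_zero, inner_sub_left,
    inner_smul_left, inner_smul_right, inner_neg_right, real_inner_comm p n, real_inner_comm v p,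
    RCLike.conj_to_real]
  field_simp
  ring

end

theorem lambertian_gain_temporal_second_order_general
    (L U N1 N2 : EuclideanSpace ℝ (Fin 3))
    (m : ℕ)
    (h : EuclideanSpace ℝ (Fin 3) → ℝ)
    (hdef : ∀ R, h R =
      (⟪N1, R - L⟫ / ‖R - L‖) ^ m * (⟪N2, R - U⟫ / ‖R - U‖) / (‖R - L‖ + ‖R - U‖) ^ 2)
    (R : EuclideanSpace ℝ (Fin 3)) (hRU : R ≠ U)
    (d1 d2 : ℝ) (hd1 : d1 = ‖R - L‖) (hd2 : d2 = ‖R - U‖)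
    (UR : EuclideanSpace ℝ (Fin 3)) (hUR : UR = (1 / d2) • (R - U))
    (cosφ : ℝ) (hcosφ : cosφ = ⟪N2, UR⟫)
    (hφ : cosφ ≠ 0) (hhR : h R ≠ 0)
    (v : EuclideanSpace ℝ (Fin 3))
    (g : ℝ → ℝ)
    (hg : ∀ t, g t =
      (⟪N1, R - L⟫ / ‖R - L‖) ^ m * (⟪N2, R - U - t • v⟫ / ‖R - U - t • v‖)
        / (‖R - L‖ + ‖R - U - t • v‖) ^ 2)
    (a b : ℝ)
    (ha : a = ⟪(1 / d2 + 2 / (d1 + d2)) • UR - (1 / (d2 * cosφ)) • N2, v⟫)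
    (hb : b = deriv (deriv g) 0 / h R)
    (ξt : ℝ → ℝ)
    (hξt : ∀ t, ξt t = (g t - g 0) / g 0) :
    (fun t => ξt t - a * t - (b / 2) * t ^ 2) =o[𝓝 0] (fun t => t ^ 2) := by
  subst hd1 hd2 hUR hcosφ
  have hp : R - U ≠ 0 := sub_ne_zero.2 hRU
  have hnp : ⟪N2, R - U⟫ ≠ 0 := fun h0 => hφ (by rw [inner_smul_right, h0, mul_zero])
  set c := (⟪N1, R - L⟫ / ‖R - L‖) ^ m
  have hgρ : g = fun t => c * receiverGain N2 ‖R - L‖ (R - U - t • v) :=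
    funext fun t => by rw [hg, receiverGain, mul_div_assoc]
  have hg0 : g 0 = h R := by rw [hg, hdef, zero_smul, sub_zero]
  have hC2 : ContDiffAt ℝ 2 g 0 := by
    have hline : ContDiffAt ℝ 2 (fun t : ℝ => R - U - t • v) 0 := by fun_prop
    rw [hgρ]
    exact contDiffAt_const.mul
      ((contDiffAt_receiverGain (norm_nonneg _) (by simpa using hp)).comp 0 hline)
  have hderiv : deriv g 0 = a * g 0 := by
    rw [hgρ, ha, ((hasDerivAt_receiverGain_sub_smul v (norm_nonneg _) hp hnp).const_mul c).deriv]
    simp only [zero_smul, sub_zero]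
    ring
  have htaylor := hC2.isLittleO_sub_taylor_two
  simp only [sub_zero, smul_eq_mul] at htaylor
  refine (htaylor.const_mul_left (g 0)⁻¹).congr_left fun t => ?_
  have hg0ne : g 0 ≠ 0 := hg0 ▸ hhR
  rw [hξt, hb, ← hg0, hderiv]
  field_simp

/-- Second-order temporal expansion of the relative channel-gain variation (Lemma 2):
`ξ_t(t) = a·t + (b/2)·t² + o(t²)` as `t → 0`, where `a` is the stated first-order
coefficient and `b` is the normalized second derivative of `g` at `0`. -/
theorem lambertian_gain_temporal_second_order
    (L U N1 N2 : EuclideanSpace ℝ (Fin 3))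
    (hN1 : ‖N1‖ = 1) (hN2 : ‖N2‖ = 1)
    (m : ℕ) (hm : 1 ≤ m)
    (h : EuclideanSpace ℝ (Fin 3) → ℝ)
    (hdef : ∀ R, h R =
      (⟪N1, R - L⟫ / ‖R - L‖) ^ m * (⟪N2, R - U⟫ / ‖R - U‖) / (‖R - L‖ + ‖R - U‖) ^ 2)
    (R : EuclideanSpace ℝ (Fin 3)) (hRL : R ≠ L) (hRU : R ≠ U)
    (d1 d2 : ℝ) (hd1 : d1 = ‖R - L‖) (hd2 : d2 = ‖R - U‖)
    (LR UR : EuclideanSpace ℝ (Fin 3)) (hLR : LR = (1 / d1) • (R - L)) (hUR : UR = (1 / d2) • (R - U))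
    (cosθ cosφ : ℝ) (hcosθ : cosθ = ⟪N1, LR⟫) (hcosφ : cosφ = ⟪N2, UR⟫)
    (hφ : cosφ ≠ 0) (hhR : h R ≠ 0)
    (v : EuclideanSpace ℝ (Fin 3))
    (g : ℝ → ℝ)
    (hg : ∀ t, g t =
      (⟪N1, R - L⟫ / ‖R - L‖) ^ m * (⟪N2, R - U - t • v⟫ / ‖R - U - t • v‖)
        / (‖R - L‖ + ‖R - U - t • v‖) ^ 2)
    (a b : ℝ)
    (ha : a = ⟪(1 / d2 + 2 / (d1 + d2)) • UR - (1 / (d2 * cosφ)) • N2, v⟫)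
    (hb : b = deriv (deriv g) 0 / h R)
    (ξt : ℝ → ℝ)
    (hξt : ∀ t, ξt t = (g t - g 0) / g 0) :
    (fun t => ξt t - a * t - (b / 2) * t ^ 2) =o[𝓝 0] (fun t => t ^ 2) :=
  lambertian_gain_temporal_second_order_general L U N1 N2 m h hdef R hRU d1 d2 hd1 hd2 UR hUR cosφ
    hcosφ hφ hhR v g hg a b ha hb ξt hξt
end

section
/- Coherence interval length, non-split case (abstract form of Theorem 1, first case): let a, b, ξ ∈ ℝ with a ≠ 0, b ≠ 0, ξ > 0, and suppose a² ≤ 2·|b|·ξ. Put t₂ = −2a/b and S = {t ∈ ℝ : |a·t + (b/2)·t²| ≤ ξ}. Then S is a nonempty closed bounded interval, i.e., S = Set.Icc (sInf S) (sSup S), and its length satisfies sSup S − sInf S = |t₂| · Real.sqrt (1 + 4ξ/(|t₂|·|a|)). -/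
/-! Completing the square, `2b·(a t + (b/2) t²) = (b t + a)² − a²`, turns `|q(t)| ≤ ξ` into
`−2|b|ξ ≤ (b t + a)² − a² ≤ 2|b|ξ`. In the non-split case `a² ≤ 2|b|ξ` the lower bound always
holds, so `S` is the single interval `|b t + a| ≤ √(a² + 2|b|ξ)`, centred at `−a/b`, of length
`2√(a² + 2|b|ξ)/|b|`; since `|t₂| = 2|a|/|b|` this is the stated length. -/

open Set

theorem abs_mul_add_le_iff_mem_Icc {a b r t : ℝ} (hb : b ≠ 0) :
    |b * t + a| ≤ r ↔ t ∈ Icc (-a / b - r / |b|) (-a / b + r / |b|) := by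
  have hcentre : b * t + a = -b * (-a / b - t) := by field_simp; ring
  rw [hcentre, abs_mul, abs_neg, ← le_div_iff₀' (abs_pos.2 hb), mem_Icc_iff_abs_le]

theorem abs_mul_add_half_mul_sq_le_iff {a b ξ t : ℝ} (hb : b ≠ 0)
    (hcase : a ^ 2 ≤ 2 * |b| * ξ) :
    |a * t + b / 2 * t ^ 2| ≤ ξ ↔ (b * t + a) ^ 2 ≤ a ^ 2 + 2 * |b| * ξ := by
  have hsquare : 2 * |b| * |a * t + b / 2 * t ^ 2| = |(b * t + a) ^ 2 - a ^ 2| := by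
    rw [show (b * t + a) ^ 2 - a ^ 2 = 2 * b * (a * t + b / 2 * t ^ 2) by ring,
      abs_mul, abs_mul, abs_two]
  rw [← mul_le_mul_iff_right₀ (by positivity : 0 < 2 * |b|), hsquare, abs_le]
  constructor
  · exact fun h => by linarith [h.2]
  · exact fun h => ⟨by nlinarith [sq_nonneg (b * t + a)], by linarith⟩

theorem abs_mul_sqrt_one_add_div_eq {a b ξ : ℝ} (ha : a ≠ 0) (hb : b ≠ 0) :
    |-2 * a / b| * √(1 + 4 * ξ / (|-2 * a / b| * |a|)) =
      2 * √(a ^ 2 + 2 * |b| * ξ) / |b| := by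
  have hprod : |-2 * a / b| * |a| = 2 * a ^ 2 / |b| := by
    rw [abs_div, abs_mul, abs_neg, abs_two, ← sq_abs a]
    ring
  have harg : 1 + 4 * ξ / (|-2 * a / b| * |a|) = (a ^ 2 + 2 * |b| * ξ) / a ^ 2 := by
    rw [hprod]
    field_simp
    ring
  rw [harg, Real.sqrt_div' _ (sq_nonneg a), Real.sqrt_sq_eq_abs, abs_div, abs_mul, abs_neg,
    abs_two]
  field_simp

theorem coherence_interval_length_nonsplit_general
    (a b ξ : ℝ) (ha : a ≠ 0) (hb : b ≠ 0)
    (hcase : a ^ 2 ≤ 2 * |b| * ξ)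
    (t₂ : ℝ) (ht₂ : t₂ = -2 * a / b)
    (S : Set ℝ) (hS : S = {t : ℝ | |a * t + (b / 2) * t ^ 2| ≤ ξ}) :
    S.Nonempty ∧ BddBelow S ∧ BddAbove S ∧ S = Set.Icc (sInf S) (sSup S) ∧
      sSup S - sInf S = |t₂| * Real.sqrt (1 + 4 * ξ / (|t₂| * |a|)) := by
  subst ht₂ hS
  set D := a ^ 2 + 2 * |b| * ξ
  have hD : 0 ≤ D := add_nonneg (sq_nonneg a) ((sq_nonneg a).trans hcase)
  have hS : {t : ℝ | |a * t + (b / 2) * t ^ 2| ≤ ξ} =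
      Icc (-a / b - √D / |b|) (-a / b + √D / |b|) := by
    ext t
    rw [mem_ofPred_eq, abs_mul_add_half_mul_sq_le_iff hb hcase, Real.sq_le hD, ← abs_le,
      abs_mul_add_le_iff_mem_Icc hb]
  have hle : -a / b - √D / |b| ≤ -a / b + √D / |b| := by
    linarith [div_nonneg (Real.sqrt_nonneg D) (abs_nonneg b)]
  rw [hS, csInf_Icc hle, csSup_Icc hle, abs_mul_sqrt_one_add_div_eq ha hb]
  exact ⟨nonempty_Icc.2 hle, bddBelow_Icc, bddAbove_Icc, rfl, by ring⟩

/-- Coherence interval length, non-split case (abstract Theorem 1, first case):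
if `a² ≤ 2|b|ξ`, the set `S = {t : |a·t + (b/2)·t²| ≤ ξ}` is a nonempty closed
bounded interval of length `|t₂|·√(1 + 4ξ/(|t₂|·|a|))` where `t₂ = −2a/b`. -/
theorem coherence_interval_length_nonsplit
    (a b ξ : ℝ) (ha : a ≠ 0) (hb : b ≠ 0) (hξ : 0 < ξ)
    (hcase : a ^ 2 ≤ 2 * |b| * ξ)
    (t₂ : ℝ) (ht₂ : t₂ = -2 * a / b)
    (S : Set ℝ) (hS : S = {t : ℝ | |a * t + (b / 2) * t ^ 2| ≤ ξ}) :
    S.Nonempty ∧ BddBelow S ∧ BddAbove S ∧ S = Set.Icc (sInf S) (sSup S) ∧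
      sSup S - sInf S = |t₂| * Real.sqrt (1 + 4 * ξ / (|t₂| * |a|)) :=
  coherence_interval_length_nonsplit_general a b ξ ha hb hcase t₂ ht₂ S hS
end

section
/- Coherence interval lower bound, split case (abstract form of Theorem 1, second case): let a, b, ξ ∈ ℝ with a ≠ 0, b ≠ 0, ξ > 0, and suppose a² > 2·|b|·ξ. Then there exist real numbers s ≤ 0 and r ≥ 0 with r − s ≥ 2ξ/|a| such that |a·t + (b/2)·t²| ≤ ξ for every t ∈ Set.Icc s r; in other words, the connected component containing 0 of the set {t : |a·t + (b/2)·t²| ≤ ξ} has length at least 2ξ/|a|. -/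
/-!
For `a > 0` the root of `a t + (b/2) t² = c` nearest to `0` is `2c / (a + √(a² + 2bc))`, and the
slope `a + b t` there equals `√(a² + 2bc) ≥ 0`. Between the roots `s` for `c = -ξ` and `r` for
`c = ξ` the slope stays nonnegative, so the quadratic increases from `-ξ` to `ξ` on `[s, r]`.
Writing `D₁, D₂` for the two square roots, `D₁² + D₂² = 2a²` gives `D₁ + D₂ ≤ 2a`, whence
`r - s = 2ξ/(a + D₁) + 2ξ/(a + D₂) ≥ 8ξ/(2a + D₁ + D₂) ≥ 2ξ/a`.
The case `a < 0` reduces to `a > 0` by `t ↦ -t`.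
-/

open Real

section Quadratic

variable {a b : ℝ}

lemma nonneg_add_mul_of_mem_Icc {s r x : ℝ} (hs : 0 ≤ a + b * s) (hr : 0 ≤ a + b * r)
    (hx : x ∈ Set.Icc s r) : 0 ≤ a + b * x := by
  rcases le_total 0 b with hb | hb
  · nlinarith [mul_le_mul_of_nonneg_left hx.1 hb]
  · nlinarith [mul_le_mul_of_nonpos_left hx.2 hb]

lemma monotoneOn_quadratic_Icc {s r : ℝ} (hs : 0 ≤ a + b * s) (hr : 0 ≤ a + b * r) :
    MonotoneOn (fun t => a * t + b / 2 * t ^ 2) (Set.Icc s r) := by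
  intro x hx y hy hxy
  have hslope := add_nonneg (nonneg_add_mul_of_mem_Icc hs hr hx) (nonneg_add_mul_of_mem_Icc hs hr hy)
  have hdiff : (a * y + b / 2 * y ^ 2) - (a * x + b / 2 * x ^ 2)
      = (y - x) * ((a + b * x) + (a + b * y)) / 2 := by ring
  have hprod := mul_nonneg (sub_nonneg.2 hxy) hslope
  show a * x + b / 2 * x ^ 2 ≤ a * y + b / 2 * y ^ 2
  linarith

/-- The root of `a t + (b/2) t² = c` nearest to `0` when `a > 0`, in a form that stays valid
at `b = 0`. -/
noncomputable def quadraticNearRoot (a b c : ℝ) : ℝ := 2 * c / (a + √(a ^ 2 + 2 * b * c))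

variable {c : ℝ}

lemma add_sqrt_pos (ha : 0 < a) : 0 < a + √(a ^ 2 + 2 * b * c) := by positivity

lemma quadraticNearRoot_mul_add_sqrt (ha : 0 < a) :
    quadraticNearRoot a b c * (a + √(a ^ 2 + 2 * b * c)) = 2 * c :=
  div_mul_cancel₀ _ (add_sqrt_pos ha).ne'

lemma add_mul_quadraticNearRoot (ha : 0 < a) (hc : 0 ≤ a ^ 2 + 2 * b * c) :
    a + b * quadraticNearRoot a b c = √(a ^ 2 + 2 * b * c) := by
  refine mul_right_cancel₀ (add_sqrt_pos (b := b) (c := c) ha).ne' ?_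
  linear_combination b * quadraticNearRoot_mul_add_sqrt (b := b) (c := c) ha - sq_sqrt hc

lemma quadraticNearRoot_spec (ha : 0 < a) (hc : 0 ≤ a ^ 2 + 2 * b * c) :
    a * quadraticNearRoot a b c + b / 2 * quadraticNearRoot a b c ^ 2 = c := by
  linear_combination (1 / 2 : ℝ) * quadraticNearRoot_mul_add_sqrt (b := b) (c := c) ha
    + quadraticNearRoot a b c / 2 * add_mul_quadraticNearRoot ha hc

lemma two_mul_div_le_quadraticNearRoot_sub (ha : 0 < a) {ξ : ℝ} (hξ : 0 ≤ ξ)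
    (hcase : 2 * |b| * ξ ≤ a ^ 2) :
    2 * ξ / a ≤ quadraticNearRoot a b ξ - quadraticNearRoot a b (-ξ) := by
  have h₁ : 0 ≤ a ^ 2 + 2 * b * ξ := by nlinarith [neg_abs_le b]
  have h₂ : 0 ≤ a ^ 2 + 2 * b * -ξ := by nlinarith [le_abs_self b]
  set D₁ := √(a ^ 2 + 2 * b * ξ)
  set D₂ := √(a ^ 2 + 2 * b * -ξ)
  have hD₁ : 0 ≤ D₁ := sqrt_nonneg _
  have hD₂ : 0 ≤ D₂ := sqrt_nonneg _
  have hsum : D₁ + D₂ ≤ 2 * a := by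
    nlinarith [sq_sqrt h₁, sq_sqrt h₂, sq_nonneg (D₁ - D₂)]
  have hrs : quadraticNearRoot a b ξ - quadraticNearRoot a b (-ξ)
      = 2 * ξ / (a + D₁) + 2 * ξ / (a + D₂) := by
    unfold quadraticNearRoot; ring
  rw [hrs, div_add_div _ _ (by positivity) (by positivity), div_le_div_iff₀ ha (by positivity)]
  nlinarith [mul_nonneg hξ (sq_nonneg (D₁ - D₂)), mul_nonneg hξ (sub_nonneg.2 hsum),
    mul_nonneg (mul_nonneg hξ hD₁) hD₂]

lemma exists_Icc_abs_quadratic_le_of_pos (ha : 0 < a) {ξ : ℝ} (hξ : 0 ≤ ξ)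
    (hcase : 2 * |b| * ξ ≤ a ^ 2) :
    ∃ s r : ℝ, s ≤ 0 ∧ 0 ≤ r ∧ 2 * ξ / a ≤ r - s ∧
      ∀ t ∈ Set.Icc s r, |a * t + (b / 2) * t ^ 2| ≤ ξ := by
  have h₁ : 0 ≤ a ^ 2 + 2 * b * ξ := by nlinarith [neg_abs_le b]
  have h₂ : 0 ≤ a ^ 2 + 2 * b * -ξ := by nlinarith [le_abs_self b]
  set s := quadraticNearRoot a b (-ξ)
  set r := quadraticNearRoot a b ξ
  have hmono : MonotoneOn (fun t => a * t + b / 2 * t ^ 2) (Set.Icc s r) :=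
    monotoneOn_quadratic_Icc (add_mul_quadraticNearRoot ha h₂ ▸ sqrt_nonneg _)
      (add_mul_quadraticNearRoot ha h₁ ▸ sqrt_nonneg _)
  have hlen := two_mul_div_le_quadraticNearRoot_sub ha hξ hcase
  have hs : s ≤ 0 := div_nonpos_of_nonpos_of_nonneg (by linarith) (add_sqrt_pos ha).le
  have hr : 0 ≤ r := div_nonneg (by linarith) (add_sqrt_pos ha).le
  refine ⟨s, r, hs, hr, hlen, fun t ht => abs_le.2 ⟨?_, ?_⟩⟩
  · calc -ξ = a * s + b / 2 * s ^ 2 := (quadraticNearRoot_spec ha h₂).symm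
      _ ≤ a * t + b / 2 * t ^ 2 := hmono ⟨le_rfl, ht.1.trans ht.2⟩ ht ht.1
  · calc a * t + b / 2 * t ^ 2 ≤ a * r + b / 2 * r ^ 2 :=
          hmono ht ⟨ht.1.trans ht.2, le_rfl⟩ ht.2
      _ = ξ := quadraticNearRoot_spec ha h₁

end Quadratic

theorem coherence_interval_length_split_general
    (a b ξ : ℝ) (ha : a ≠ 0) (hξ : 0 < ξ)
    (hcase : 2 * |b| * ξ < a ^ 2) :
    ∃ s r : ℝ, s ≤ 0 ∧ 0 ≤ r ∧ 2 * ξ / |a| ≤ r - s ∧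
      ∀ t ∈ Set.Icc s r, |a * t + (b / 2) * t ^ 2| ≤ ξ := by
  rcases ha.lt_or_gt with hneg | hpos
  · have hcase' : 2 * |b| * ξ ≤ (-a) ^ 2 := by rw [neg_sq]; exact hcase.le
    obtain ⟨s, r, hs, hr, hlen, hq⟩ :=
      exists_Icc_abs_quadratic_le_of_pos (neg_pos.2 hneg) hξ.le hcase'
    refine ⟨-r, -s, by linarith, by linarith, by rw [abs_of_neg hneg]; linarith, ?_⟩
    intro t ht
    have hqt := hq (-t) ⟨by linarith [ht.2], by linarith [ht.1]⟩
    rwa [show -a * -t + b / 2 * (-t) ^ 2 = a * t + b / 2 * t ^ 2 by ring] at hqt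
  · rw [abs_of_pos hpos]
    exact exists_Icc_abs_quadratic_le_of_pos hpos hξ.le hcase.le

/-- Coherence interval lower bound, split case (abstract Theorem 1, second case):
if `a² > 2|b|ξ`, the connected component of `{t : |a·t + (b/2)·t²| ≤ ξ}` containing `0`
has length at least `2ξ/|a|`. -/
theorem coherence_interval_length_split
    (a b ξ : ℝ) (ha : a ≠ 0) (hb : b ≠ 0) (hξ : 0 < ξ)
    (hcase : 2 * |b| * ξ < a ^ 2) :
    ∃ s r : ℝ, s ≤ 0 ∧ 0 ≤ r ∧ 2 * ξ / |a| ≤ r - s ∧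
      ∀ t ∈ Set.Icc s r, |a * t + (b / 2) * t ^ 2| ≤ ξ :=
  coherence_interval_length_split_general a b ξ ha hξ hcase
end
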